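/- Perturbed solvability: with the same linear system as above but with an added perturbation term c^{μm}_{σl} a_{μm}, where c^{μm}_{σl} = 0 unless |μ|+m−1 < |σ|+l ≤ k and |c^{μm}_{σl}| ≤ δ: for δ small enough (depending on n, k), given A_{σl} and a_{μ,0}, the system A_{σl} = (l+1)(l+2+2σₙ)a_{σ,l+1} + (σₙ+1)a_{σ+ēₙ,l} + (σᵢ+1)(σᵢ+2)a_{σ+2ēᵢ,l−1} + c^{μm}_{σl}a_{μm} is uniquely solvable, and the solution satisfies ‖a‖ ≤ C(‖A‖ + ‖a_{·,0}‖) with C depending only on n, k. -/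
import Mathlib


open Finset

/-- The perturbed approximating-polynomial linear system: `a` is supported on
`|μ|+m ≤ k+1`, has prescribed zeroth-level values `b`, and satisfies
`A_{σl} = (l+1)(l+2+2σₙ)a_{σ,l+1} + (σₙ+1)a_{σ+ēₙ,l} + Σᵢ(σᵢ+1)(σᵢ+2)a_{σ+2ēᵢ,l−1}
 + Σ_{μ,m} c^{μm}_{σl} a_{μm}` for all `|σ|+l ≤ k`. -/
def PerturbedSys (n k : ℕ)
    (c : (Fin (n+1) → ℕ) → ℕ → (Fin (n+1) → ℕ) → ℕ → ℝ)
    (A : (Fin (n+1) → ℕ) → ℕ → ℝ) (b : (Fin (n+1) → ℕ) → ℝ)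
    (a : (Fin (n+1) → ℕ) → ℕ → ℝ) : Prop :=
  (∀ (μ : Fin (n+1) → ℕ) (m : ℕ), k + 1 < (∑ i, μ i) + m → a μ m = 0) ∧
  (∀ μ : Fin (n+1) → ℕ, (∑ i, μ i) ≤ k + 1 → a μ 0 = b μ) ∧
  (∀ (σ : Fin (n+1) → ℕ) (l : ℕ), (∑ i, σ i) + l ≤ k →
    ((l : ℝ) + 1) * ((l : ℝ) + 2 + 2 * (σ (Fin.last n) : ℝ)) * a σ (l + 1)
      + ((σ (Fin.last n) : ℝ) + 1) * a (σ + Pi.single (Fin.last n) 1) l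
      + (if l = 0 then 0 else
          ∑ i, ((σ i : ℝ) + 1) * ((σ i : ℝ) + 2) * a (σ + Pi.single i 2) (l - 1))
      + (∑ μ : Fin (n+1) → Fin (k+2), ∑ m ∈ Finset.range (k+2),
          c (fun i => (μ i : ℕ)) m σ l * a (fun i => (μ i : ℕ)) m)
      = A σ l)

namespace Stmt15Aux

/-- total degree -/
def deg (n : ℕ) (μ : Fin (n+1) → ℕ) : ℕ := ∑ i, μ i

lemma deg_add_single (n : ℕ) (μ : Fin (n+1) → ℕ) (i : Fin (n+1)) (t : ℕ) :
    deg n (μ + Pi.single i t) = deg n μ + t := by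
  unfold deg
  simp [Finset.sum_add_distrib, Finset.sum_pi_single']

lemma apply_le_deg (n : ℕ) (μ : Fin (n+1) → ℕ) (i : Fin (n+1)) : μ i ≤ deg n μ :=
  Finset.single_le_sum (fun _ _ => Nat.zero_le _) (Finset.mem_univ i)

/-- ranking of unknowns: lexicographic in (total degree, m) -/
def rk (n k : ℕ) (μ : Fin (n+1) → ℕ) (m : ℕ) : ℕ := (k+2) * (deg n μ + m) + m

/-- one step of the solving iteration -/
noncomputable def Fstep (n k : ℕ)
    (c : (Fin (n+1) → ℕ) → ℕ → (Fin (n+1) → ℕ) → ℕ → ℝ)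
    (A : (Fin (n+1) → ℕ) → ℕ → ℝ) (b : (Fin (n+1) → ℕ) → ℝ)
    (x : (Fin (n+1) → ℕ) → ℕ → ℝ) : (Fin (n+1) → ℕ) → ℕ → ℝ
  | μ, 0 => if k + 1 < deg n μ then 0 else b μ
  | μ, (l+1) =>
      if k + 1 < deg n μ + (l+1) then 0 else
      (A μ l - ((μ (Fin.last n) : ℝ) + 1) * x (μ + Pi.single (Fin.last n) 1) l
        - (if l = 0 then 0 else
            ∑ i, ((μ i : ℝ) + 1) * ((μ i : ℝ) + 2) * x (μ + Pi.single i 2) (l - 1))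
        - (∑ ν : Fin (n+1) → Fin (k+2), ∑ p ∈ Finset.range (k+2),
            c (fun i => (ν i : ℕ)) p μ l * x (fun i => (ν i : ℕ)) p))
      / (((l:ℝ) + 1) * ((l:ℝ) + 2 + 2 * (μ (Fin.last n) : ℝ)))

section

variable (n k : ℕ)
    (c : (Fin (n+1) → ℕ) → ℕ → (Fin (n+1) → ℕ) → ℕ → ℝ)
    (A : (Fin (n+1) → ℕ) → ℕ → ℝ) (b : (Fin (n+1) → ℕ) → ℝ)

lemma diag_pos (l : ℕ) (μ : Fin (n+1) → ℕ) :
    0 < ((l:ℝ) + 1) * ((l:ℝ) + 2 + 2 * (μ (Fin.last n) : ℝ)) := by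
  have h1 : (0:ℝ) ≤ (l:ℝ) := Nat.cast_nonneg _
  have h2 : (0:ℝ) ≤ (μ (Fin.last n) : ℝ) := Nat.cast_nonneg _
  nlinarith

lemma Fstep_out (x : (Fin (n+1) → ℕ) → ℕ → ℝ) (μ : Fin (n+1) → ℕ) (m : ℕ)
    (h : k + 1 < deg n μ + m) : Fstep n k c A b x μ m = 0 := by
  cases m with
  | zero => simp only [Fstep]; rw [if_pos (by omega)]
  | succ l => simp only [Fstep]; rw [if_pos h]

/-- rank inequalities -/
lemma rk_single_last (μ : Fin (n+1) → ℕ) (l : ℕ) :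
    rk n k (μ + Pi.single (Fin.last n) 1) l < rk n k μ (l+1) := by
  unfold rk
  rw [deg_add_single]
  have : deg n μ + 1 + l = deg n μ + (l+1) := by omega
  rw [this]
  omega

lemma rk_single_two (μ : Fin (n+1) → ℕ) (i : Fin (n+1)) (l : ℕ) (hl : l ≠ 0) :
    rk n k (μ + Pi.single i 2) (l-1) < rk n k μ (l+1) := by
  unfold rk
  rw [deg_add_single]
  have : deg n μ + 2 + (l-1) = deg n μ + (l+1) := by omega
  rw [this]
  omega

lemma rk_pert (μ ν : Fin (n+1) → ℕ) (l p : ℕ) (hp : p ≤ k + 1)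
    (hle : deg n ν + p ≤ deg n μ + l) :
    rk n k ν p < rk n k μ (l+1) := by
  unfold rk
  have h1 : (k+2) * (deg n ν + p) ≤ (k+2) * (deg n μ + l) := Nat.mul_le_mul_left _ hle
  have h2 : (k+2) * (deg n μ + (l+1)) = (k+2) * (deg n μ + l) + (k+2) := by ring
  omega

variable (hc : ∀ (μ : Fin (n+1) → ℕ) (m : ℕ) (σ : Fin (n+1) → ℕ) (l : ℕ),
        c μ m σ l ≠ 0 → (∑ i, μ i) + m ≤ (∑ i, σ i) + l ∧ (∑ i, σ i) + l ≤ k)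

include hc in
lemma Fstep_congr (x y : (Fin (n+1) → ℕ) → ℕ → ℝ) (μ : Fin (n+1) → ℕ) (m : ℕ)
    (h : ∀ ν p, rk n k ν p < rk n k μ m → x ν p = y ν p) :
    Fstep n k c A b x μ m = Fstep n k c A b y μ m := by
  cases m with
  | zero => rfl
  | succ l =>
    simp only [Fstep]
    by_cases hout : k + 1 < deg n μ + (l+1)
    · rw [if_pos hout, if_pos hout]
    · rw [if_neg hout, if_neg hout]
      have e1 : x (μ + Pi.single (Fin.last n) 1) l = y (μ + Pi.single (Fin.last n) 1) l :=
        h _ _ (rk_single_last n k μ l)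
      have e2 : (if l = 0 then (0:ℝ) else
            ∑ i, ((μ i : ℝ) + 1) * ((μ i : ℝ) + 2) * x (μ + Pi.single i 2) (l - 1))
          = (if l = 0 then (0:ℝ) else
            ∑ i, ((μ i : ℝ) + 1) * ((μ i : ℝ) + 2) * y (μ + Pi.single i 2) (l - 1)) := by
        by_cases hl : l = 0
        · rw [if_pos hl, if_pos hl]
        · rw [if_neg hl, if_neg hl]
          refine Finset.sum_congr rfl fun i _ => ?_
          rw [h _ _ (rk_single_two n k μ i l hl)]
      have e3 : (∑ ν : Fin (n+1) → Fin (k+2), ∑ p ∈ Finset.range (k+2),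
            c (fun i => (ν i : ℕ)) p μ l * x (fun i => (ν i : ℕ)) p)
          = (∑ ν : Fin (n+1) → Fin (k+2), ∑ p ∈ Finset.range (k+2),
            c (fun i => (ν i : ℕ)) p μ l * y (fun i => (ν i : ℕ)) p) := by
        refine Finset.sum_congr rfl fun ν _ => Finset.sum_congr rfl fun p hp => ?_
        by_cases hc0 : c (fun i => (ν i : ℕ)) p μ l = 0
        · rw [hc0]; ring
        · have hsupp := (hc _ _ _ _ hc0).1
          have hple : p ≤ k + 1 := by
            have := Finset.mem_range.mp hp; omega
          rw [h _ _ (rk_pert n k μ _ l p hple hsupp)]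
      rw [e1, e2, e3]

include hc in
lemma iterate_agree (t : ℕ) (x y : (Fin (n+1) → ℕ) → ℕ → ℝ) (μ : Fin (n+1) → ℕ) (m : ℕ)
    (h : rk n k μ m < t) :
    (Fstep n k c A b)^[t] x μ m = (Fstep n k c A b)^[t] y μ m := by
  induction t generalizing μ m with
  | zero => omega
  | succ t ih =>
    rw [Function.iterate_succ_apply', Function.iterate_succ_apply']
    exact Fstep_congr n k c A b hc _ _ μ m (fun ν p hlt => ih ν p (by omega))

/-- the candidate solution -/
noncomputable def sol : (Fin (n+1) → ℕ) → ℕ → ℝ :=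
  (Fstep n k c A b)^[(k+2)*(k+2)] (fun _ _ => 0)

lemma rk_lt_of_inrange (μ : Fin (n+1) → ℕ) (m : ℕ) (h : deg n μ + m ≤ k + 1) :
    rk n k μ m < (k+2)*(k+2) := by
  unfold rk
  have h1 : (k+2) * (deg n μ + m) ≤ (k+2) * (k+1) := Nat.mul_le_mul_left _ h
  have h2 : (k+2) * (k+2) = (k+2)*(k+1) + (k+2) := by ring
  omega

lemma sol_out (μ : Fin (n+1) → ℕ) (m : ℕ) (h : k + 1 < deg n μ + m) :
    sol n k c A b μ m = 0 := by
  unfold sol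
  have h1 : 1 ≤ (k+2)*(k+2) := Nat.mul_pos (by omega) (by omega)
  have : (k+2)*(k+2) = ((k+2)*(k+2) - 1) + 1 := by omega
  rw [this, Function.iterate_succ_apply']
  exact Fstep_out n k c A b _ μ m h

include hc in
lemma sol_fixed (μ : Fin (n+1) → ℕ) (m : ℕ) :
    sol n k c A b μ m = Fstep n k c A b (sol n k c A b) μ m := by
  by_cases h : k + 1 < deg n μ + m
  · rw [sol_out n k c A b μ m h, Fstep_out n k c A b _ μ m h]
  · have hrk : rk n k μ m < (k+2)*(k+2) := rk_lt_of_inrange n k μ m (by omega)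
    unfold sol
    rw [← Function.iterate_succ_apply' (Fstep n k c A b)]
    rw [Function.iterate_succ_apply]
    exact (iterate_agree n k c A b hc _ _ _ μ m hrk).symm

include hc in
lemma fixed_of_sys (a : (Fin (n+1) → ℕ) → ℕ → ℝ) (ha : PerturbedSys n k c A b a)
    (μ : Fin (n+1) → ℕ) (m : ℕ) : a μ m = Fstep n k c A b a μ m := by
  obtain ⟨h1, h2, h3⟩ := ha
  by_cases h : k + 1 < deg n μ + m
  · rw [h1 μ m h, Fstep_out n k c A b _ μ m h]
  · cases m with
    | zero =>
      simp only [Fstep]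
      rw [if_neg (show ¬ (k + 1 < deg n μ) by unfold deg at h ⊢; omega)]
      exact h2 μ (by unfold deg at h; omega)
    | succ l =>
      simp only [Fstep]
      rw [if_neg h]
      have hk : deg n μ + l ≤ k := by omega
      have heq := h3 μ l hk
      have hd := diag_pos n l μ
      rw [eq_div_iff (ne_of_gt hd)]
      linear_combination heq

include hc in
lemma sys_of_fixed (a : (Fin (n+1) → ℕ) → ℕ → ℝ)
    (hfix : ∀ μ m, a μ m = Fstep n k c A b a μ m) :
    PerturbedSys n k c A b a := by
  refine ⟨fun μ m h => ?_, fun μ h => ?_, fun σ l h => ?_⟩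
  · rw [hfix μ m]; exact Fstep_out n k c A b _ μ m h
  · rw [hfix μ 0]; simp only [Fstep]
    rw [if_neg (show ¬ (k + 1 < deg n μ) by unfold deg; omega)]
  · have hfix' := hfix σ (l+1)
    simp only [Fstep] at hfix'
    rw [if_neg (show ¬ (k + 1 < deg n σ + (l+1)) by unfold deg; omega)] at hfix'
    have hd := diag_pos n l σ
    rw [eq_div_iff (ne_of_gt hd)] at hfix'
    linear_combination hfix'

include hc in
lemma sys_unique (a a' : (Fin (n+1) → ℕ) → ℕ → ℝ)
    (ha : PerturbedSys n k c A b a) (ha' : PerturbedSys n k c A b a') : a = a' := by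
  have key : ∀ r (μ : Fin (n+1) → ℕ) (m : ℕ), rk n k μ m = r → a μ m = a' μ m := by
    intro r
    induction r using Nat.strong_induction_on with
    | _ r ih =>
      intro μ m hr
      rw [fixed_of_sys n k c A b hc a ha μ m, fixed_of_sys n k c A b hc a' ha' μ m]
      exact Fstep_congr n k c A b hc a a' μ m
        (fun ν p hlt => ih (rk n k ν p) (hr ▸ hlt) ν p rfl)
  funext μ m
  exact key (rk n k μ m) μ m rfl

end

end Stmt15Aux

set_option maxHeartbeats 4000000 in
open Stmt15Aux in
/-- perturbed solvability: if the perturbation coefficients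
`c^{μm}_{σl}` vanish unless `|μ|+m−1 < |σ|+l ≤ k` and satisfy `|c| ≤ δ`, then
for `δ` small (depending on `n,k`) the perturbed system is uniquely solvable,
with the stability bound `|a_{μm}| ≤ C(K₁+K₂)` whenever `|A| ≤ K₁`, `|b| ≤ K₂`,
`C = C(n,k)`. -/
theorem stmt15 (n k : ℕ) :
    ∃ δ > (0:ℝ), ∃ C > (0:ℝ),
      ∀ c : (Fin (n+1) → ℕ) → ℕ → (Fin (n+1) → ℕ) → ℕ → ℝ,
      (∀ (μ : Fin (n+1) → ℕ) (m : ℕ) (σ : Fin (n+1) → ℕ) (l : ℕ),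
        c μ m σ l ≠ 0 → (∑ i, μ i) + m ≤ (∑ i, σ i) + l ∧ (∑ i, σ i) + l ≤ k) →
      (∀ μ m σ l, |c μ m σ l| ≤ δ) →
      ∀ (A : (Fin (n+1) → ℕ) → ℕ → ℝ) (b : (Fin (n+1) → ℕ) → ℝ),
        (∃! a, PerturbedSys n k c A b a) ∧
        (∀ K₁ K₂ : ℝ,
          (∀ (σ : Fin (n+1) → ℕ) (l : ℕ), (∑ i, σ i) + l ≤ k → |A σ l| ≤ K₁) →
          (∀ μ : Fin (n+1) → ℕ, (∑ i, μ i) ≤ k + 1 → |b μ| ≤ K₂) →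
          ∀ a, PerturbedSys n k c A b a → ∀ μ m, |a μ m| ≤ C * (K₁ + K₂)) := by
  -- the "big constant"
  set M : ℝ := 1 + ((k:ℝ)+2) + ((n:ℝ)+1)*((k:ℝ)+3)*((k:ℝ)+4) + ((k:ℝ)+2)^(n+2) with hM
  have hM1 : (1:ℝ) ≤ M := by
    have h1 : (0:ℝ) ≤ (k:ℝ) := Nat.cast_nonneg _
    have h2 : (0:ℝ) ≤ (n:ℝ) := Nat.cast_nonneg _
    have h3 : (0:ℝ) ≤ ((k:ℝ)+2)^(n+2) := by positivity
    have h4 : (0:ℝ) ≤ ((n:ℝ)+1)*((k:ℝ)+3)*((k:ℝ)+4) := by positivity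
    rw [hM]; linarith
  have hM0 : (0:ℝ) < M := lt_of_lt_of_le one_pos hM1
  refine ⟨1, one_pos, M ^ ((k+2)*(k+2)), by positivity, fun c hc hcδ A b => ?_⟩
  constructor
  · -- existence and uniqueness
    refine ⟨sol n k c A b, sys_of_fixed n k c A b hc _ (sol_fixed n k c A b hc), ?_⟩
    intro a ha
    exact sys_unique n k c A b hc a (sol n k c A b) ha
      (sys_of_fixed n k c A b hc _ (sol_fixed n k c A b hc))
  · -- stability
    intro K₁ K₂ hA hb a ha μ₀ m₀
    set S : ℝ := K₁ + K₂ with hS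
    have hK₁ : 0 ≤ K₁ := le_trans (abs_nonneg _) (hA (fun _ => 0) 0 (by simp))
    have hK₂ : 0 ≤ K₂ := le_trans (abs_nonneg _) (hb (fun _ => 0) (by simp))
    have hS0 : 0 ≤ S := by positivity
    have hfix := fixed_of_sys n k c A b hc a ha
    -- main induction: |a μ m| ≤ M ^ (rk μ m) * S
    have key : ∀ r (μ : Fin (n+1) → ℕ) (m : ℕ), rk n k μ m = r → |a μ m| ≤ M ^ r * S := by
      intro r
      induction r using Nat.strong_induction_on with
      | _ r ih =>
        intro μ m hr
        have hMr : (0:ℝ) ≤ M ^ r * S := by positivity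
        by_cases hout : k + 1 < deg n μ + m
        · rw [ha.1 μ m hout]; simpa using hMr
        · -- in range
          -- bound on all lower-rank values
          have hprev : ∀ (ν : Fin (n+1) → ℕ) (p : ℕ), rk n k ν p < r → |a ν p| ≤ M ^ (r-1) * S := by
            intro ν p hlt
            have h1 := ih (rk n k ν p) hlt ν p rfl
            have h2 : M ^ (rk n k ν p) ≤ M ^ (r-1) :=
              pow_le_pow_right₀ hM1 (by omega)
            calc |a ν p| ≤ M ^ (rk n k ν p) * S := h1
              _ ≤ M ^ (r-1) * S := mul_le_mul_of_nonneg_right h2 hS0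
          cases m with
          | zero =>
            rw [ha.2.1 μ (by unfold deg at hout; omega)]
            have h1 : |b μ| ≤ K₂ := hb μ (by unfold deg at hout; omega)
            have hone : (1:ℝ) ≤ M ^ r := by
              simpa using pow_le_pow_right₀ hM1 (Nat.zero_le r)
            nlinarith
          | succ l =>
            have hk : deg n μ + l ≤ k := by omega
            have hr1 : 1 ≤ r := by unfold rk at hr; omega
            set E : ℝ := M ^ (r-1) * S with hE
            have hE0 : 0 ≤ E := by positivity
            have hSE : S ≤ E := by
              have hone : (1:ℝ) ≤ M ^ (r-1) := by
                simpa using pow_le_pow_right₀ hM1 (Nat.zero_le (r-1))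
              nlinarith
            -- the fixed point equation
            have heq := hfix μ (l+1)
            simp only [Fstep] at heq
            rw [if_neg (show ¬ (k + 1 < deg n μ + (l+1)) by omega)] at heq
            set d : ℝ := ((l:ℝ) + 1) * ((l:ℝ) + 2 + 2 * (μ (Fin.last n) : ℝ)) with hdd
            have hd : 0 < d := diag_pos n l μ
            have hd1 : 1 ≤ d := by
              have h1 : (0:ℝ) ≤ (l:ℝ) := Nat.cast_nonneg _
              have h2 : (0:ℝ) ≤ (μ (Fin.last n) : ℝ) := Nat.cast_nonneg _
              rw [hdd]; nlinarith
            set B : ℝ := ((μ (Fin.last n) : ℝ) + 1) * a (μ + Pi.single (Fin.last n) 1) l with hB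
            set Cc : ℝ := (if l = 0 then (0:ℝ) else
                ∑ i, ((μ i : ℝ) + 1) * ((μ i : ℝ) + 2) * a (μ + Pi.single i 2) (l - 1)) with hCc
            set D : ℝ := (∑ ν : Fin (n+1) → Fin (k+2), ∑ p ∈ Finset.range (k+2),
                c (fun i => (ν i : ℕ)) p μ l * a (fun i => (ν i : ℕ)) p) with hD
            -- bound each piece
            have hcoordk : ∀ i, (μ i : ℝ) ≤ (k:ℝ) + 1 := by
              intro i
              have h1 : μ i ≤ k + 1 := le_trans (apply_le_deg n μ i) (by omega)
              exact_mod_cast h1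
            have bA : |A μ l| ≤ E := le_trans (hA μ l hk) (le_trans (by nlinarith) hSE)
            have bB : |B| ≤ ((k:ℝ)+2) * E := by
              rw [hB, abs_mul]
              have h1 : |(μ (Fin.last n) : ℝ) + 1| ≤ (k:ℝ)+2 := by
                rw [abs_of_nonneg (by positivity)]
                have := hcoordk (Fin.last n); linarith
              have h2 : |a (μ + Pi.single (Fin.last n) 1) l| ≤ E :=
                hprev _ _ (hr ▸ rk_single_last n k μ l)
              exact mul_le_mul h1 h2 (abs_nonneg _) (by positivity)
            have bC : |Cc| ≤ ((n:ℝ)+1)*((k:ℝ)+3)*((k:ℝ)+4) * E := by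
              rw [hCc]
              by_cases hl : l = 0
              · rw [if_pos hl]; simp; positivity
              · rw [if_neg hl]
                calc |∑ i, ((μ i : ℝ) + 1) * ((μ i : ℝ) + 2) * a (μ + Pi.single i 2) (l - 1)|
                    ≤ ∑ i, |((μ i : ℝ) + 1) * ((μ i : ℝ) + 2) * a (μ + Pi.single i 2) (l - 1)| :=
                      Finset.abs_sum_le_sum_abs _ _
                  _ ≤ (Finset.univ : Finset (Fin (n+1))).card • (((k:ℝ)+3)*((k:ℝ)+4) * E) := by
                      refine Finset.sum_le_card_nsmul _ _ _ fun i _ => ?_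
                      rw [abs_mul, abs_mul]
                      have h1 : |(μ i : ℝ) + 1| ≤ (k:ℝ)+3 := by
                        rw [abs_of_nonneg (by positivity)]
                        have := hcoordk i; linarith
                      have h2 : |(μ i : ℝ) + 2| ≤ (k:ℝ)+4 := by
                        rw [abs_of_nonneg (by positivity)]
                        have := hcoordk i; linarith
                      have h3 : |a (μ + Pi.single i 2) (l - 1)| ≤ E :=
                        hprev _ _ (hr ▸ rk_single_two n k μ i l hl)
                      calc |(μ i : ℝ) + 1| * |(μ i : ℝ) + 2| * |a (μ + Pi.single i 2) (l - 1)|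
                          ≤ (((k:ℝ)+3) * ((k:ℝ)+4)) * E := by
                            refine mul_le_mul ?_ h3 (abs_nonneg _) (by positivity)
                            exact mul_le_mul h1 h2 (abs_nonneg _) (by positivity)
                        _ = ((k:ℝ)+3)*((k:ℝ)+4) * E := by ring
                  _ = ((n:ℝ)+1)*((k:ℝ)+3)*((k:ℝ)+4) * E := by
                      rw [Finset.card_univ, Fintype.card_fin, nsmul_eq_mul]
                      push_cast; ring
            have bD : |D| ≤ ((k:ℝ)+2)^(n+2) * E := by
              rw [hD]
              calc |∑ ν : Fin (n+1) → Fin (k+2), ∑ p ∈ Finset.range (k+2),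
                    c (fun i => (ν i : ℕ)) p μ l * a (fun i => (ν i : ℕ)) p|
                  ≤ ∑ ν : Fin (n+1) → Fin (k+2), |∑ p ∈ Finset.range (k+2),
                    c (fun i => (ν i : ℕ)) p μ l * a (fun i => (ν i : ℕ)) p| :=
                    Finset.abs_sum_le_sum_abs _ _
                _ ≤ (Finset.univ : Finset (Fin (n+1) → Fin (k+2))).card • (((k:ℝ)+2) * E) := by
                    refine Finset.sum_le_card_nsmul _ _ _ fun ν _ => ?_
                    calc |∑ p ∈ Finset.range (k+2),
                          c (fun i => (ν i : ℕ)) p μ l * a (fun i => (ν i : ℕ)) p|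
                        ≤ ∑ p ∈ Finset.range (k+2),
                          |c (fun i => (ν i : ℕ)) p μ l * a (fun i => (ν i : ℕ)) p| :=
                          Finset.abs_sum_le_sum_abs _ _
                      _ ≤ (Finset.range (k+2)).card • E := by
                          refine Finset.sum_le_card_nsmul _ _ _ fun p hp => ?_
                          by_cases hc0 : c (fun i => (ν i : ℕ)) p μ l = 0
                          · rw [hc0]; simpa using hE0
                          · rw [abs_mul]
                            have h1 : |c (fun i => (ν i : ℕ)) p μ l| ≤ 1 := hcδ _ _ _ _
                            have hsupp := (hc _ _ _ _ hc0).1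
                            have hple : p ≤ k + 1 := by
                              have := Finset.mem_range.mp hp; omega
                            have h2 : |a (fun i => (ν i : ℕ)) p| ≤ E :=
                              hprev _ _ (hr ▸ rk_pert n k μ _ l p hple hsupp)
                            calc |c (fun i => (ν i : ℕ)) p μ l| * |a (fun i => (ν i : ℕ)) p|
                                ≤ 1 * E := mul_le_mul h1 h2 (abs_nonneg _) one_pos.le
                              _ = E := one_mul E
                      _ = ((k:ℝ)+2) * E := by
                          rw [Finset.card_range, nsmul_eq_mul]; push_cast; ring
                _ = ((k:ℝ)+2)^(n+2) * E := by
                    rw [Finset.card_univ, nsmul_eq_mul]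
                    have hcard : Fintype.card (Fin (n+1) → Fin (k+2)) = (k+2)^(n+1) := by simp
                    rw [hcard]
                    push_cast
                    rw [show (n+2) = (n+1)+1 from rfl, pow_succ]
                    ring
            -- combine
            have habs : |a μ (l+1)| ≤ |A μ l - B - Cc - D| := by
              rw [heq, abs_div, abs_of_pos hd]
              exact div_le_self (abs_nonneg _) hd1
            have htri : |A μ l - B - Cc - D| ≤ |A μ l| + |B| + |Cc| + |D| := by
              calc |A μ l - B - Cc - D| ≤ |A μ l - B - Cc| + |D| := abs_sub _ _
                _ ≤ (|A μ l - B| + |Cc|) + |D| := by gcongr; exact abs_sub _ _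
                _ ≤ (|A μ l| + |B|) + |Cc| + |D| := by gcongr; exact abs_sub _ _
            have hfin : |a μ (l+1)| ≤ M * E := by
              have : |A μ l| + |B| + |Cc| + |D| ≤ M * E := by
                rw [hM]; nlinarith [bA, bB, bC, bD]
              linarith
            have hME : M * E = M ^ r * S := by
              rw [hE, ← mul_assoc, ← pow_succ']
              congr 2
              omega
            rw [← hME]
            exact hfin
    -- conclude
    by_cases hout : k + 1 < deg n μ₀ + m₀
    · rw [ha.1 μ₀ m₀ (by unfold deg at hout; omega)]
      have : (0:ℝ) ≤ M ^ ((k+2)*(k+2)) * S := by positivity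
      simpa using this
    · have h1 := key (rk n k μ₀ m₀) μ₀ m₀ rfl
      have h2 : M ^ (rk n k μ₀ m₀) ≤ M ^ ((k+2)*(k+2)) :=
        pow_le_pow_right₀ hM1 (le_of_lt (rk_lt_of_inrange n k μ₀ m₀ (by omega)))
      calc |a μ₀ m₀| ≤ M ^ (rk n k μ₀ m₀) * S := h1
        _ ≤ M ^ ((k+2)*(k+2)) * S := mul_le_mul_of_nonneg_right h2 hS0
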